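/- arXiv:1910.04956 — 5 statements merged into one kernel-verified Lean document; each statement's English description precedes it below -/
import Mathlib

section
/- Let W ∈ ℝ^{n×n} be a row-stochastic matrix (nonnegative entries, each row summing to 1) with strictly positive diagonal entries whose support graph (an edge from i to j whenever W_{ij} > 0) is strongly connected. Then there exists a constant δ_min > 0 such that for every integer k ≥ 1 and every i ∈ [n], the i-th column sum of W^k satisfies Σ_{j=1}^n (W^k)_{ji} ≥ δ_min. -/
/-- **Lemma 1 (time-invariant form).** For a row-stochastic matrix `W` with strictly positive
diagonal whose support graph is strongly connected, the column sums of all powers `W^k` (`k ≥ 1`)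
are uniformly bounded below by some `δ_min > 0`. -/
theorem column_sums_of_powers_bounded_below
    (n : ℕ) (hn : 0 < n) (W : Matrix (Fin n) (Fin n) ℝ)
    (hW_nonneg : ∀ i j, 0 ≤ W i j)
    (hW_row : ∀ i, ∑ j, W i j = 1)
    (hW_diag : ∀ i, 0 < W i i)
    (hW_conn : ∀ i j : Fin n, Relation.ReflTransGen (fun a b : Fin n => 0 < W a b) i j) :
    ∃ δmin : ℝ, 0 < δmin ∧ ∀ k : ℕ, 1 ≤ k → ∀ i : Fin n,
      δmin ≤ ∑ j, (W ^ k) j i := by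
  haveI : NeZero n := ⟨hn.ne'⟩
  have huniv : (Finset.univ : Finset (Fin n)).Nonempty := Finset.univ_nonempty
  -- nonnegativity of powers
  have hpow_nonneg : ∀ (k : ℕ) (i j : Fin n), 0 ≤ (W ^ k) i j := by
    intro k
    induction k with
    | zero =>
      intro i j
      rw [pow_zero]
      by_cases h : i = j <;> simp [Matrix.one_apply, h]
    | succ k ih =>
      intro i j
      rw [pow_succ, Matrix.mul_apply]
      exact Finset.sum_nonneg fun l _ => mul_nonneg (ih i l) (hW_nonneg l j)
  -- entry-positivity propagation
  have hentry : ∀ (k : ℕ) (a c b : Fin n), 0 < (W ^ k) a c → 0 < W c b →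
      0 < (W ^ (k + 1)) a b := by
    intro k a c b h1 h2
    rw [pow_succ, Matrix.mul_apply]
    have hle : (W ^ k) a c * W c b ≤ ∑ l, (W ^ k) a l * W l b :=
      Finset.single_le_sum (fun l _ => mul_nonneg (hpow_nonneg k a l) (hW_nonneg l b))
        (Finset.mem_univ c)
    exact lt_of_lt_of_le (mul_pos h1 h2) hle
  have hmono : ∀ (a b : Fin n) (k m : ℕ), k ≤ m → 0 < (W ^ k) a b → 0 < (W ^ m) a b := by
    intro a b k m hkm hpos
    induction m, hkm using Nat.le_induction with
    | base => exact hpos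
    | succ m hm ih => exact hentry m a b b ih (hW_diag b)
  -- reachability gives some power with positive entry
  have hreach : ∀ a b : Fin n, ∃ m : ℕ, 0 < (W ^ m) a b := by
    intro a b
    induction hW_conn a b with
    | refl => exact ⟨0, by simp [pow_zero, Matrix.one_apply]⟩
    | tail r h ih =>
      obtain ⟨m, hm⟩ := ih
      exact ⟨m + 1, hentry m a _ _ hm h⟩
  -- a uniform power M with all entries positive
  obtain ⟨f, hf⟩ : ∃ f : Fin n × Fin n → ℕ, ∀ p : Fin n × Fin n, 0 < (W ^ f p) p.1 p.2 := by
    choose f hf using fun p : Fin n × Fin n => hreach p.1 p.2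
    exact ⟨f, hf⟩
  set M : ℕ := (Finset.univ.sup f) + 1 with hM
  have hMpos : ∀ a b : Fin n, 0 < (W ^ M) a b := by
    intro a b
    exact hmono a b (f (a, b)) M
      (le_trans (Finset.le_sup (Finset.mem_univ (a, b))) (Nat.le_succ _)) (hf (a, b))
  -- row sums of powers are 1
  have hrow : ∀ (k : ℕ) (i : Fin n), ∑ j, (W ^ k) i j = 1 := by
    intro k
    induction k with
    | zero => intro i; simp [pow_zero, Matrix.one_apply]
    | succ k ih =>
      intro i
      simp only [pow_succ, Matrix.mul_apply]
      rw [Finset.sum_comm]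
      calc ∑ l, ∑ j, (W ^ k) i l * W l j = ∑ l, (W ^ k) i l * ∑ j, W l j := by
            simp [Finset.mul_sum]
        _ = 1 := by simp [hW_row, ih]
  -- minimal diagonal entry
  set d : ℝ := Finset.univ.inf' huniv (fun i => W i i) with hd
  have hdpos : 0 < d := by
    rw [hd, Finset.lt_inf'_iff]
    exact fun i _ => hW_diag i
  have hdle : ∀ i : Fin n, d ≤ W i i := fun i => Finset.inf'_le _ (Finset.mem_univ i)
  have hdle1 : d ≤ 1 := by
    obtain ⟨i⟩ := (inferInstance : Nonempty (Fin n))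
    refine le_trans (hdle i) ?_
    rw [← hW_row i]
    exact Finset.single_le_sum (fun j _ => hW_nonneg i j) (Finset.mem_univ i)
  -- diagonal entries of powers are at least d ^ k
  have hdiagpow : ∀ (k : ℕ) (i : Fin n), d ^ k ≤ (W ^ k) i i := by
    intro k
    induction k with
    | zero => intro i; simp [pow_zero, Matrix.one_apply]
    | succ k ih =>
      intro i
      rw [pow_succ, pow_succ, Matrix.mul_apply]
      calc d ^ k * d ≤ (W ^ k) i i * W i i :=
            mul_le_mul (ih i) (hdle i) hdpos.le (hpow_nonneg k i i)
        _ ≤ ∑ l, (W ^ k) i l * W l i :=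
            Finset.single_le_sum
              (fun l _ => mul_nonneg (hpow_nonneg k i l) (hW_nonneg l i))
              (Finset.mem_univ i)
  -- minimal entry of W ^ M
  set ε : ℝ := Finset.univ.inf' (Finset.univ_nonempty)
      (fun p : Fin n × Fin n => (W ^ M) p.1 p.2) with hε
  have hεpos : 0 < ε := by
    rw [hε, Finset.lt_inf'_iff]
    exact fun p _ => hMpos p.1 p.2
  have hεle : ∀ a b : Fin n, ε ≤ (W ^ M) a b := fun a b =>
    Finset.inf'_le _ (Finset.mem_univ (a, b))
  refine ⟨min ε (d ^ M), lt_min hεpos (pow_pos hdpos M), ?_⟩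
  intro k hk i
  rcases le_or_gt M k with h | h
  · -- large k : every entry of W ^ k is at least ε
    obtain ⟨r, hr⟩ := Nat.exists_eq_add_of_le h
    have hcol : ε ≤ ∑ j, (W ^ k) j i := by
      have hki : ε ≤ (W ^ k) i i := by
        rw [hr, add_comm, pow_add, Matrix.mul_apply]
        calc ε = (∑ l, (W ^ r) i l) * ε := by rw [hrow r i, one_mul]
          _ = ∑ l, (W ^ r) i l * ε := by rw [Finset.sum_mul]
          _ ≤ ∑ l, (W ^ r) i l * (W ^ M) l i :=
            Finset.sum_le_sum fun l _ =>
              mul_le_mul_of_nonneg_left (hεle l i) (hpow_nonneg r i l)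
      refine le_trans hki ?_
      exact Finset.single_le_sum (fun j _ => hpow_nonneg k j i) (Finset.mem_univ i)
    exact le_trans (min_le_left _ _) hcol
  · -- small k : use the diagonal entry
    have h1 : d ^ M ≤ d ^ k := pow_le_pow_of_le_one hdpos.le hdle1 h.le
    have h2 : (W ^ k) i i ≤ ∑ j, (W ^ k) j i :=
      Finset.single_le_sum (fun j _ => hpow_nonneg k j i) (Finset.mem_univ i)
    exact le_trans (min_le_right _ _) (le_trans h1 (le_trans (hdiagpow k i) h2))
end

section
/- Let ρ ∈ [0,1) and let {b_t}_{t≥1} be a nonnegative real sequence. Then for every k ≥ 1, Σ_{t=1}^k Σ_{s=1}^t Σ_{r=1}^t ρ^{2t−s−r} b_s b_r ≤ (1/(1−ρ)) Σ_{t=1}^k Σ_{s=1}^t ρ^{t−s} b_s². -/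
lemma geom_icc_bound (ρ : ℝ) (hρ0 : 0 ≤ ρ) (hρ1 : ρ < 1) (t : ℕ) :
    ∑ r ∈ Finset.Icc 1 t, ρ ^ (t - r) ≤ 1 / (1 - ρ) := by
  have h1ρ : (0:ℝ) < 1 - ρ := by linarith
  have h1 : ∑ r ∈ Finset.Icc 1 t, ρ ^ (t - r) = ∑ i ∈ Finset.range t, ρ ^ i := by
    refine Finset.sum_nbij' (fun r => t - r) (fun i => t - i) ?_ ?_ ?_ ?_ ?_ <;>
        intro a ha <;> simp only [Finset.mem_Icc, Finset.mem_range] at ha ⊢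
    · omega
    · omega
    · omega
    · omega
  rw [h1, geom_sum_eq (ne_of_lt hρ1),
    show ρ ^ t - 1 = -(1 - ρ ^ t) by ring, show ρ - 1 = -(1 - ρ) by ring, neg_div_neg_eq,
    div_le_div_iff₀ h1ρ h1ρ]
  nlinarith [pow_nonneg hρ0 t]

/-- The key intermediate inequality in the proof of Lemma 3: for `ρ ∈ [0,1)` and a
nonnegative sequence `b`,
`∑_{t=1}^k ∑_{s=1}^t ∑_{r=1}^t ρ^(2t-s-r) b_s b_r ≤ (1/(1-ρ)) ∑_{t=1}^k ∑_{s=1}^t ρ^(t-s) b_s²`. -/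
theorem seq_lemma_double_sum (ρ : ℝ) (hρ0 : 0 ≤ ρ) (hρ1 : ρ < 1)
    (b : ℕ → ℝ) (hb : ∀ t, 0 ≤ b t)
    (k : ℕ) (hk : 1 ≤ k) :
    ∑ t ∈ Finset.Icc 1 k, ∑ s ∈ Finset.Icc 1 t, ∑ r ∈ Finset.Icc 1 t,
        ρ ^ (2 * t - s - r) * (b s * b r)
      ≤ (1 / (1 - ρ)) * ∑ t ∈ Finset.Icc 1 k, ∑ s ∈ Finset.Icc 1 t, ρ ^ (t - s) * (b s) ^ 2 := by
  rw [Finset.mul_sum]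
  apply Finset.sum_le_sum
  intro t _
  calc ∑ s ∈ Finset.Icc 1 t, ∑ r ∈ Finset.Icc 1 t, ρ ^ (2 * t - s - r) * (b s * b r)
      ≤ ∑ s ∈ Finset.Icc 1 t, ∑ r ∈ Finset.Icc 1 t,
          (ρ ^ (2 * t - s - r) * b s ^ 2 / 2 + ρ ^ (2 * t - s - r) * b r ^ 2 / 2) := by
        apply Finset.sum_le_sum; intro s _
        apply Finset.sum_le_sum; intro r _
        have h := pow_nonneg hρ0 (2 * t - s - r)
        nlinarith [sq_nonneg (b s - b r), hb s, hb r]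
    _ = ∑ s ∈ Finset.Icc 1 t, ∑ r ∈ Finset.Icc 1 t, ρ ^ (2 * t - s - r) * b s ^ 2 := by
        simp only [Finset.sum_add_distrib]
        have hswap' : ∑ s ∈ Finset.Icc 1 t, ∑ r ∈ Finset.Icc 1 t,
              ρ ^ (2 * t - s - r) * b r ^ 2 / 2
            = ∑ s ∈ Finset.Icc 1 t, ∑ r ∈ Finset.Icc 1 t,
              ρ ^ (2 * t - s - r) * b s ^ 2 / 2 := by
          rw [Finset.sum_comm]
          refine Finset.sum_congr rfl fun s _ => Finset.sum_congr rfl fun r _ => ?_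
          rw [show 2 * t - r - s = 2 * t - s - r from by omega]
        rw [hswap', ← Finset.sum_add_distrib]
        refine Finset.sum_congr rfl fun s _ => ?_
        rw [← Finset.sum_add_distrib]
        refine Finset.sum_congr rfl fun r _ => by ring
    _ = ∑ s ∈ Finset.Icc 1 t, (ρ ^ (t - s) * b s ^ 2) * ∑ r ∈ Finset.Icc 1 t, ρ ^ (t - r) := by
        refine Finset.sum_congr rfl fun s hs => ?_
        rw [Finset.mul_sum]
        refine Finset.sum_congr rfl fun r hr => ?_
        simp only [Finset.mem_Icc] at hs hr
        rw [show 2 * t - s - r = (t - s) + (t - r) by omega, pow_add]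
        ring
    _ ≤ ∑ s ∈ Finset.Icc 1 t, (ρ ^ (t - s) * b s ^ 2) * (1 / (1 - ρ)) := by
        apply Finset.sum_le_sum; intro s _
        exact mul_le_mul_of_nonneg_left (geom_icc_bound ρ hρ0 hρ1 t)
          (mul_nonneg (pow_nonneg hρ0 _) (sq_nonneg _))
    _ = 1 / (1 - ρ) * ∑ s ∈ Finset.Icc 1 t, ρ ^ (t - s) * b s ^ 2 := by
        rw [Finset.mul_sum]; exact Finset.sum_congr rfl fun s _ => by ring
end

section
/- In the matrix form of OPS, assume there exist a stochastic vector ψ ∈ ℝ^n (ψ_i ≥ 0, Σ_i ψ_i = 1) and constants C ≥ 0, q ∈ [0,1) such that |(W^k)_{ji} − ψ_i| ≤ C q^k for all i, j ∈ [n] and all k ≥ 1, and a constant δ_min > 0 such that Σ_j (W^k)_{ji} ≥ n δ_min for all i ∈ [n] and k ≥ 1. Then for every T ≥ 0, Σ_{t=0}^T Σ_{i=1}^n ‖x_{t+1}^{(i)} − z̄_{t+1}‖² ≤ (4 γ² C² q² / (δ_min² (1−q)²)) Σ_{t=0}^T ‖G_t‖_F². -/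
/-!
Unrolling the recursions gives `Z_t = -γ ∑_{s<t} G_s W^{t-s}` and `ω_t^{(i)} = ∑_j (W^t)_{ji}`.
Every power of `W` is row-stochastic, so the column average of `G_s W^k` is that of `G_s`, and
the `(r, i)` entry of `x_t - z̄_t` is
`-γ ∑_{s<t} ∑_j (G_s)_{rj} ((W^{t-s})_{ji} / ω_t^{(i)} - 1/n)`.
Both `(W^{t-s})_{ji}` and `ω_t^{(i)} / n` lie within `C q^{t-s}` of `ψ_i`, and
`ω_t^{(i)} ≥ n δ_min`, so each coefficient is at most `2 C q^{t-s} / (n δ_min)`. The error is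
thus dominated by the convolution of the kernel `q^{k+1}` with `∑_j |(G_s)_{rj}|`; Young's
inequality with `‖q^{·+1}‖₁ ≤ q / (1 - q)`, then Cauchy–Schwarz over `j`, gives the bound.
-/

open Finset Matrix

/-- Young's inequality `‖a ⋆ b‖₂ ≤ ‖a‖₁ ‖b‖₂`, truncated at `N`. -/
theorem sum_sq_conv_le {a : ℕ → ℝ} (ha : ∀ k, 0 ≤ a k) (b : ℕ → ℝ) (N : ℕ) :
    ∑ t ∈ range N, (∑ s ∈ range (t + 1), a (t - s) * b s) ^ 2
      ≤ (∑ k ∈ range N, a k) ^ 2 * ∑ s ∈ range N, b s ^ 2 := by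
  set A := ∑ k ∈ range N, a k
  have partial_le : ∀ m ≤ N, ∑ k ∈ range m, a k ≤ A := fun m hm =>
    sum_le_sum_of_subset_of_nonneg (range_mono hm) fun k _ _ => ha k
  have row : ∀ t < N, (∑ s ∈ range (t + 1), a (t - s) * b s) ^ 2
      ≤ A * ∑ s ∈ range (t + 1), a (t - s) * b s ^ 2 := by
    intro t ht
    calc _ ≤ (∑ s ∈ range (t + 1), a (t - s)) * ∑ s ∈ range (t + 1), a (t - s) * b s ^ 2 :=
          sum_sq_le_sum_mul_sum_of_sq_le_mul _ (fun s _ => ha _)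
            (fun s _ => mul_nonneg (ha _) (sq_nonneg _)) (fun s _ => le_of_eq (by ring))
      _ ≤ A * _ := by
          gcongr
          · exact sum_nonneg fun s _ => mul_nonneg (ha _) (sq_nonneg _)
          · have reflect := sum_range_reflect a (t + 1)
            rw [Nat.add_sub_cancel] at reflect
            rw [reflect]
            exact partial_le _ ht
  have column : ∀ s < N, ∑ t ∈ Ico s N, a (t - s) ≤ A := by
    intro s hs
    rw [sum_Ico_eq_sum_range]
    simp only [Nat.add_sub_cancel_left]
    exact partial_le _ (by omega)
  calc _ ≤ ∑ t ∈ range N, A * ∑ s ∈ range (t + 1), a (t - s) * b s ^ 2 :=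
        sum_le_sum fun t ht => row t (mem_range.1 ht)
    _ = A * ∑ s ∈ range N, (∑ t ∈ Ico s N, a (t - s)) * b s ^ 2 := by
        simp only [← mul_sum, sum_mul, range_eq_Ico]
        congr 1
        exact (sum_Ico_Ico_comm 0 N fun s t => a (t - s) * b s ^ 2).symm
    _ ≤ A * ∑ s ∈ range N, A * b s ^ 2 := by
        gcongr with s hs
        · exact sum_nonneg fun k _ => ha k
        · exact column s (mem_range.1 hs)
    _ = A ^ 2 * ∑ s ∈ range N, b s ^ 2 := by rw [← mul_sum]; ring

theorem sum_range_pow_succ_le {q : ℝ} (hq0 : 0 ≤ q) (hq1 : q < 1) (N : ℕ) :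
    ∑ k ∈ range N, q ^ (k + 1) ≤ q / (1 - q) := by
  have geom := geom_sum_Ico_le_of_lt_one (m := 0) (n := N) hq0 hq1
  rw [← range_eq_Ico, pow_zero] at geom
  simp only [pow_succ, ← sum_mul]
  calc _ ≤ 1 / (1 - q) * q := by gcongr
    _ = q / (1 - q) := by ring

theorem sum_sq_geom_conv_le {q : ℝ} (hq0 : 0 ≤ q) (hq1 : q < 1) (b : ℕ → ℝ) (N : ℕ) :
    ∑ t ∈ range N, (∑ s ∈ range (t + 1), q ^ (t - s + 1) * b s) ^ 2
      ≤ (q / (1 - q)) ^ 2 * ∑ s ∈ range N, b s ^ 2 := by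
  refine (sum_sq_conv_le (fun k => pow_nonneg hq0 (k + 1)) b N).trans ?_
  gcongr
  exact sum_range_pow_succ_le hq0 hq1 N

theorem sum_sq_le_of_abs_le_geom_conv {ι : Type*} [Fintype ι] {q α : ℝ} (hq0 : 0 ≤ q)
    (hq1 : q < 1) {e : ℕ → ℝ} {g : ℕ → ι → ℝ}
    (he : ∀ t, |e t| ≤ α * ∑ s ∈ range (t + 1), q ^ (t - s + 1) * ∑ j, |g s j|) (N : ℕ) :
    ∑ t ∈ range N, e t ^ 2
      ≤ α ^ 2 * (q / (1 - q)) ^ 2 * (Fintype.card ι * ∑ t ∈ range N, ∑ j, g t j ^ 2) := by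
  calc _ ≤ ∑ t ∈ range N, (α * ∑ s ∈ range (t + 1), q ^ (t - s + 1) * ∑ j, |g s j|) ^ 2 :=
        sum_le_sum fun t _ => sq_le_sq' (abs_le.1 (he t)).1 (abs_le.1 (he t)).2
    _ ≤ α ^ 2 * ((q / (1 - q)) ^ 2 * ∑ t ∈ range N, (∑ j, |g t j|) ^ 2) := by
        simp only [mul_pow, ← mul_sum]
        gcongr
        exact sum_sq_geom_conv_le hq0 hq1 _ _
    _ ≤ α ^ 2 * ((q / (1 - q)) ^ 2 * ∑ t ∈ range N, Fintype.card ι * ∑ j, g t j ^ 2) := by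
        gcongr with t
        simpa using sq_sum_le_card_mul_sum_sq (s := univ) (f := fun j => |g t j|)
    _ = _ := by rw [← mul_sum]; ring

section

variable {R : Type*} {ι κ : Type*} [Fintype ι] [DecidableEq ι]

theorem Matrix.eq_neg_smul_sum_mul_pow_of_recursion [CommRing R] {W : Matrix ι ι R} {γ : R}
    {G Z : ℕ → Matrix κ ι R} (hZ0 : Z 0 = 0) (hZ : ∀ t, Z (t + 1) = (Z t - γ • G t) * W)
    (t : ℕ) : Z t = -γ • ∑ s ∈ range t, G s * W ^ (t - s) := by
  induction t with
  | zero => simp [hZ0]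
  | succ t ih =>
    have shift : ∀ s ∈ range t, G s * W ^ (t - s) * W = G s * W ^ (t + 1 - s) := by
      intro s hs
      rw [Matrix.mul_assoc, ← pow_succ, Nat.sub_add_comm (mem_range.1 hs).le]
    rw [hZ, ih, sum_range_succ, Nat.add_sub_cancel_left, pow_one, ← sum_congr rfl shift,
      Matrix.sub_mul, Matrix.smul_mul, Matrix.smul_mul, Matrix.sum_mul, smul_add, neg_smul,
      neg_smul, sub_eq_add_neg]

theorem Matrix.eq_sum_pow_apply_of_recursion [CommSemiring R] {W : Matrix ι ι R}
    {w : ℕ → ι → R} (hw0 : ∀ i, w 0 i = 1) (hw : ∀ t i, w (t + 1) i = ∑ j, W j i * w t j)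
    (t : ℕ) (i : ι) : w t i = ∑ j, (W ^ t) j i := by
  induction t generalizing i with
  | zero => simp [hw0, one_apply]
  | succ t ih =>
    simp only [hw, ih, pow_succ, mul_apply, mul_sum]
    rw [sum_comm]
    exact sum_congr rfl fun j _ => sum_congr rfl fun l _ => mul_comm _ _

omit [DecidableEq ι] in
theorem Matrix.mul_mul_apply_sub_avg [Field R] {P : Matrix ι ι R} (hP : ∀ j, ∑ l, P j l = 1)
    (M : Matrix κ ι R) (c : R) (r : κ) (i : ι) :
    c * (M * P) r i - (Fintype.card ι : R)⁻¹ * ∑ l, (M * P) r l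
      = ∑ j, M r j * (c * P j i - (Fintype.card ι : R)⁻¹) := by
  have row_sum : ∑ l, (M * P) r l = ∑ j, M r j := by
    simp only [mul_apply]
    rw [sum_comm]
    simp [← mul_sum, hP]
  rw [row_sum, mul_apply, mul_sum, mul_sum, ← sum_sub_distrib]
  exact sum_congr rfl fun j _ => by ring

theorem Matrix.smul_sum_apply_sub_avg [Field R] {W : Matrix ι ι R}
    (hW : ∀ k j, ∑ l, (W ^ k) j l = 1)
    (G : ℕ → Matrix κ ι R) (γ c : R) (t : ℕ) (r : κ) (i : ι) :
    c * (-γ • ∑ s ∈ range t, G s * W ^ (t - s)) r i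
        - (Fintype.card ι : R)⁻¹ * ∑ l, (-γ • ∑ s ∈ range t, G s * W ^ (t - s)) r l
      = -γ * ∑ s ∈ range t, ∑ j, G s r j * (c * (W ^ (t - s)) j i - (Fintype.card ι : R)⁻¹) := by
  rw [← sum_congr rfl fun s _ => mul_mul_apply_sub_avg (hW (t - s)) (G s) c r i]
  simp only [smul_apply, sum_apply, smul_eq_mul, mul_sub, mul_sum, sum_sub_distrib]
  rw [sum_comm (s := univ)]
  congr 1
  · exact sum_congr rfl fun s _ => by ring
  · exact sum_congr rfl fun s _ => sum_congr rfl fun l _ => by ring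

omit [DecidableEq ι] in
theorem abs_inv_card_mul_sum_sub_le [Nonempty ι] {f : ι → ℝ} {c ε : ℝ}
    (h : ∀ l, |f l - c| ≤ ε) : |(Fintype.card ι : ℝ)⁻¹ * ∑ l, f l - c| ≤ ε := by
  have hN : (0 : ℝ) < Fintype.card ι := by exact_mod_cast Fintype.card_pos
  have centered : (Fintype.card ι : ℝ)⁻¹ * ∑ l, f l - c
      = (Fintype.card ι : ℝ)⁻¹ * ∑ l, (f l - c) := by
    rw [sum_sub_distrib, sum_const, card_univ, nsmul_eq_mul]
    field_simp
  rw [centered, abs_mul, abs_inv, Nat.abs_cast, inv_mul_le_iff₀ hN]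
  calc |∑ l, (f l - c)| ≤ ∑ l, |f l - c| := abs_sum_le_sum_abs _ _
    _ ≤ ∑ _l : ι, ε := sum_le_sum fun l _ => h l
    _ = (Fintype.card ι : ℝ) * ε := by simp

variable {W : Matrix ι ι ℝ} {ψ : ι → ℝ} {C q δ : ℝ}

theorem abs_inv_colSum_mul_pow_apply_sub_inv_card_le (hC : 0 ≤ C) (hq0 : 0 ≤ q) (hq1 : q ≤ 1)
    (hδ : 0 < δ) (hgeom : ∀ k, 1 ≤ k → ∀ i j, |(W ^ k) j i - ψ i| ≤ C * q ^ k)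
    (hlow : ∀ k, 1 ≤ k → ∀ i, (Fintype.card ι : ℝ) * δ ≤ ∑ j, (W ^ k) j i)
    {k m : ℕ} (hk : 1 ≤ k) (hkm : k ≤ m) (i j : ι) :
    |(∑ l, (W ^ m) l i)⁻¹ * (W ^ k) j i - (Fintype.card ι : ℝ)⁻¹|
      ≤ 2 * C * q ^ k / (Fintype.card ι * δ) := by
  have : Nonempty ι := ⟨i⟩
  set N : ℝ := (Fintype.card ι : ℝ)
  set ω := ∑ l, (W ^ m) l i
  have hNδ : 0 < N * δ := mul_pos (Nat.cast_pos.2 Fintype.card_pos) hδ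
  have hω : N * δ ≤ ω := hlow m (hk.trans hkm) i
  have avg_near : |N⁻¹ * ω - ψ i| ≤ C * q ^ k :=
    (abs_inv_card_mul_sum_sub_le fun l => hgeom m (hk.trans hkm) i l).trans
      (mul_le_mul_of_nonneg_left (pow_le_pow_of_le_one hq0 hq1 hkm) hC)
  have entry_near : |(W ^ k) j i - N⁻¹ * ω| ≤ 2 * C * q ^ k := by
    calc _ ≤ |(W ^ k) j i - ψ i| + |ψ i - N⁻¹ * ω| := abs_sub_le _ _ _
      _ ≤ C * q ^ k + C * q ^ k := by
          rw [abs_sub_comm (ψ i)]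
          exact add_le_add (hgeom k hk i j) avg_near
      _ = 2 * C * q ^ k := by ring
  have hωpos : 0 < ω := hNδ.trans_le hω
  rw [show ω⁻¹ * (W ^ k) j i - N⁻¹ = ((W ^ k) j i - N⁻¹ * ω) / ω by field_simp,
    abs_div, abs_of_pos hωpos]
  exact div_le_div₀ (by positivity) entry_near hNδ hω

theorem abs_neg_smul_sum_mul_pow_apply_sub_avg_le (hW : W ∈ rowStochastic ℝ ι) (hC : 0 ≤ C)
    (hq0 : 0 ≤ q) (hq1 : q ≤ 1) (hδ : 0 < δ)
    (hgeom : ∀ k, 1 ≤ k → ∀ i j, |(W ^ k) j i - ψ i| ≤ C * q ^ k)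
    (hlow : ∀ k, 1 ≤ k → ∀ i, (Fintype.card ι : ℝ) * δ ≤ ∑ j, (W ^ k) j i)
    (G : ℕ → Matrix κ ι ℝ) (γ : ℝ) (t : ℕ) (r : κ) (i : ι) :
    |(∑ l, (W ^ t) l i)⁻¹ * (-γ • ∑ s ∈ range t, G s * W ^ (t - s)) r i
        - (Fintype.card ι : ℝ)⁻¹ * ∑ l, (-γ • ∑ s ∈ range t, G s * W ^ (t - s)) r l|
      ≤ 2 * |γ| * C / (Fintype.card ι * δ) * ∑ s ∈ range t, q ^ (t - s) * ∑ j, |G s r j| := by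
  rw [smul_sum_apply_sub_avg fun k => sum_row_of_mem_rowStochastic (pow_mem hW k), abs_mul,
    abs_neg]
  calc _ ≤ |γ| * ∑ s ∈ range t, ∑ j, |G s r j| * (2 * C * q ^ (t - s) / (Fintype.card ι * δ)) := by
        gcongr
        refine (abs_sum_le_sum_abs _ _).trans (sum_le_sum fun s hs => ?_)
        refine (abs_sum_le_sum_abs _ _).trans (sum_le_sum fun j _ => ?_)
        rw [abs_mul]
        gcongr
        exact abs_inv_colSum_mul_pow_apply_sub_inv_card_le hC hq0 hq1 hδ hgeom hlow
          (Nat.sub_pos_of_lt (mem_range.1 hs)) (Nat.sub_le t s) i j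
    _ = _ := by
        rw [mul_sum, mul_sum]
        exact sum_congr rfl fun s _ => by rw [← sum_mul]; ring

end

theorem ops_consensus_bound_general
    (n d : ℕ) (hn : 0 < n) (γ : ℝ)
    (W : Matrix (Fin n) (Fin n) ℝ)
    (hW_nonneg : ∀ i j, 0 ≤ W i j)
    (hW_row : ∀ i, ∑ j, W i j = 1)
    (ψ : Fin n → ℝ)
    (C q δmin : ℝ) (hC : 0 ≤ C) (hq0 : 0 ≤ q) (hq1 : q < 1) (hδ : 0 < δmin)
    (hWgeom : ∀ k : ℕ, 1 ≤ k → ∀ i j : Fin n, |(W ^ k) j i - ψ i| ≤ C * q ^ k)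
    (hWlow : ∀ k : ℕ, 1 ≤ k → ∀ i : Fin n, (n : ℝ) * δmin ≤ ∑ j, (W ^ k) j i)
    (G : ℕ → Matrix (Fin d) (Fin n) ℝ)
    (Z : ℕ → Matrix (Fin d) (Fin n) ℝ)
    (hZ0 : Z 0 = 0)
    (hZrec : ∀ t, Z (t + 1) = (Z t - γ • G t) * W)
    (w : ℕ → Fin n → ℝ)
    (hw0 : ∀ i, w 0 i = 1)
    (hwrec : ∀ t i, w (t + 1) i = ∑ j, W j i * w t j)
    (x : ℕ → Fin n → Fin d → ℝ)
    (hx : ∀ t i r, x t i r = (w t i)⁻¹ * Z t r i)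
    (zbar : ℕ → Fin d → ℝ)
    (hzbar : ∀ t r, zbar t r = (n : ℝ)⁻¹ * ∑ i, Z t r i)
    (T : ℕ) :
    ∑ t ∈ Finset.range (T + 1), ∑ i, ∑ r, (x (t + 1) i r - zbar (t + 1) r) ^ 2
      ≤ 4 * γ ^ 2 * C ^ 2 * q ^ 2 / (δmin ^ 2 * (1 - q) ^ 2)
        * ∑ t ∈ Finset.range (T + 1), ∑ r, ∑ i, (G t r i) ^ 2 := by
  have hW : W ∈ rowStochastic ℝ (Fin n) := mem_rowStochastic_iff_sum.2 ⟨hW_nonneg, hW_row⟩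
  set α := 2 * |γ| * C / (n * δmin)
  have deviation : ∀ i r t, |x (t + 1) i r - zbar (t + 1) r|
      ≤ α * ∑ s ∈ range (t + 1), q ^ (t - s + 1) * ∑ j, |G s r j| := by
    intro i r t
    have h := abs_neg_smul_sum_mul_pow_apply_sub_avg_le hW hC hq0 hq1.le hδ hWgeom
      (by simpa using hWlow) G γ (t + 1) r i
    rw [Fintype.card_fin] at h
    rw [hx, hzbar, eq_sum_pow_apply_of_recursion hw0 hwrec,
      eq_neg_smul_sum_mul_pow_of_recursion hZ0 hZrec]
    refine h.trans_eq (congrArg _ (sum_congr rfl fun s hs => ?_))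
    rw [Nat.sub_add_comm (Nat.lt_succ_iff.1 (mem_range.1 hs))]
  calc _ = ∑ i, ∑ r, ∑ t ∈ range (T + 1), (x (t + 1) i r - zbar (t + 1) r) ^ 2 :=
        sum_comm.trans (sum_congr rfl fun i _ => sum_comm)
    _ ≤ ∑ i : Fin n, ∑ r, α ^ 2 * (q / (1 - q)) ^ 2
          * (Fintype.card (Fin n) * ∑ t ∈ range (T + 1), ∑ j, G t r j ^ 2) :=
        sum_le_sum fun i _ => sum_le_sum fun r _ =>
          sum_sq_le_of_abs_le_geom_conv hq0 hq1 (deviation i r) _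
    _ = _ := by
        have hn' : (n : ℝ) ≠ 0 := Nat.cast_ne_zero.2 hn.ne'
        simp only [← mul_sum, sum_const, card_univ, Fintype.card_fin, nsmul_eq_mul]
        rw [sum_comm (s := univ)]
        simp only [α, div_pow, mul_pow, sq_abs]
        field_simp
        ring

/-- **Lemma 4.** Consensus bound for the matrix form of OPS: under the geometric concentration
and lower-bound assumptions on the powers of the row-stochastic matrix `W`,
`∑_{t=0}^T ∑_i ‖x_{t+1}^{(i)} - z̄_{t+1}‖² ≤ (4 γ² C² q² / (δ_min² (1-q)²)) ∑_{t=0}^T ‖G_t‖_F²`. -/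
theorem ops_consensus_bound
    (n d : ℕ) (hn : 0 < n) (hd : 0 < d) (γ : ℝ) (hγ : 0 < γ)
    (W : Matrix (Fin n) (Fin n) ℝ)
    (hW_nonneg : ∀ i j, 0 ≤ W i j)
    (hW_row : ∀ i, ∑ j, W i j = 1)
    (ψ : Fin n → ℝ) (hψ0 : ∀ i, 0 ≤ ψ i) (hψ1 : ∑ i, ψ i = 1)
    (C q δmin : ℝ) (hC : 0 ≤ C) (hq0 : 0 ≤ q) (hq1 : q < 1) (hδ : 0 < δmin)
    (hWgeom : ∀ k : ℕ, 1 ≤ k → ∀ i j : Fin n, |(W ^ k) j i - ψ i| ≤ C * q ^ k)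
    (hWlow : ∀ k : ℕ, 1 ≤ k → ∀ i : Fin n, (n : ℝ) * δmin ≤ ∑ j, (W ^ k) j i)
    (G : ℕ → Matrix (Fin d) (Fin n) ℝ)
    (Z : ℕ → Matrix (Fin d) (Fin n) ℝ)
    (hZ0 : Z 0 = 0)
    (hZrec : ∀ t, Z (t + 1) = (Z t - γ • G t) * W)
    (w : ℕ → Fin n → ℝ)
    (hw0 : ∀ i, w 0 i = 1)
    (hwrec : ∀ t i, w (t + 1) i = ∑ j, W j i * w t j)
    (x : ℕ → Fin n → Fin d → ℝ)
    (hx : ∀ t i r, x t i r = (w t i)⁻¹ * Z t r i)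
    (zbar : ℕ → Fin d → ℝ)
    (hzbar : ∀ t r, zbar t r = (n : ℝ)⁻¹ * ∑ i, Z t r i)
    (T : ℕ) :
    ∑ t ∈ Finset.range (T + 1), ∑ i, ∑ r, (x (t + 1) i r - zbar (t + 1) r) ^ 2
      ≤ 4 * γ ^ 2 * C ^ 2 * q ^ 2 / (δmin ^ 2 * (1 - q) ^ 2)
        * ∑ t ∈ Finset.range (T + 1), ∑ r, ∑ i, (G t r i) ^ 2 :=
  ops_consensus_bound_general n d hn γ W hW_nonneg hW_row ψ C q δmin hC hq0 hq1 hδ hWgeom hWlow G Z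
    hZ0 hZrec w hw0 hwrec x hx zbar hzbar T
end

section
/- Let W ∈ ℝ^{n×n} be row stochastic and suppose there exist a stochastic vector ψ ∈ ℝ^n and constants C ≥ 0, q ∈ [0,1) such that |(W^k)_{ji} − ψ_i| ≤ C q^k for all i, j ∈ [n] and all k ≥ 1. Then for any matrices G_0, …, G_t ∈ ℝ^{d×n} and any t ≥ 0, ‖ Σ_{s=0}^t ( n G_s W^{t−s+1} − G_s 1 1ᵀ W^{t+1} ) ‖_F ≤ 2 n² C q Σ_{s=0}^t q^{t−s} ‖G_s‖_F. -/
/-! Each summand factors as `G_s (n W^{t-s+1} - 𝟙𝟙ᵀ W^{t+1})`. The `(j, i)` entry of the bracket is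
`∑ₗ ((W^{t-s+1})_{ji} - (W^{t+1})_{li})`, and since both powers are within `C q^k` of `ψ_i`, every
entry is at most `2 n C q^{t-s+1}` in absolute value. The entrywise bound `‖A‖_F ≤ n max |A_{ji}|`
and submultiplicativity of the Frobenius norm bound the summand by `2 n² C q^{t-s+1} ‖G_s‖_F`, and
the triangle inequality sums these bounds. -/

/-- Frobenius norm of a real matrix. -/
noncomputable def frobNorm {d n : ℕ} (A : Matrix (Fin d) (Fin n) ℝ) : ℝ :=
  Real.sqrt (∑ r, ∑ i, (A r i) ^ 2)

open Finset Fintype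

open scoped Matrix.Norms.Frobenius

namespace Matrix

variable {l m n : Type*}

theorem frobenius_norm_eq_sqrt [Fintype m] [Fintype n] (A : Matrix m n ℝ) :
    ‖A‖ = √(∑ i, ∑ j, A i j ^ 2) := by
  simp [frobenius_norm_def, Real.sqrt_eq_rpow]

theorem frobenius_norm_le_of_forall_abs_le [Fintype m] [Fintype n] {c : ℝ} (A : Matrix m n ℝ)
    (h : ∀ i j, |A i j| ≤ c) :
    ‖A‖ ≤ √(card m * card n) * c := by
  rcases isEmpty_or_nonempty m with _ | ⟨⟨i⟩⟩
  · simp [Subsingleton.elim A 0]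
  rcases isEmpty_or_nonempty n with _ | ⟨⟨j⟩⟩
  · simp [Subsingleton.elim A 0]
  have hc : 0 ≤ c := (abs_nonneg _).trans (h i j)
  calc ‖A‖ = √(∑ i, ∑ j, A i j ^ 2) := frobenius_norm_eq_sqrt A
    _ ≤ √(∑ _i : m, ∑ _j : n, c ^ 2) := by
      refine Real.sqrt_le_sqrt (sum_le_sum fun i _ => sum_le_sum fun j _ => ?_)
      exact sq_le_sq' (abs_le.mp (h i j)).1 (abs_le.mp (h i j)).2
    _ = √(card m * card n) * c := by
      simp only [sum_const, card_univ, nsmul_eq_mul]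
      rw [← mul_assoc, Real.sqrt_mul (by positivity), Real.sqrt_sq hc]

theorem abs_card_smul_sub_ones_mul_apply_le [Fintype l] {M : Matrix m n ℝ} {N : Matrix l n ℝ}
    {ψ : n → ℝ} {a b : ℝ} (hM : ∀ i j, |M j i - ψ i| ≤ a) (hN : ∀ i k, |N k i - ψ i| ≤ b)
    (j : m) (i : n) :
    |((card l : ℝ) • M - of (fun (_ : m) (_ : l) => (1 : ℝ)) * N) j i| ≤ card l * (a + b) := by
  have hentry : ((card l : ℝ) • M - of (fun (_ : m) (_ : l) => (1 : ℝ)) * N) j i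
      = ∑ k : l, ((M j i - ψ i) - (N k i - ψ i)) := by
    simp [mul_apply, sum_sub_distrib]
  calc _ = |∑ k : l, ((M j i - ψ i) - (N k i - ψ i))| := by rw [hentry]
    _ ≤ ∑ k : l, (|M j i - ψ i| + |N k i - ψ i|) :=
      (abs_sum_le_sum_abs _ _).trans (sum_le_sum fun k _ => abs_sub _ _)
    _ ≤ ∑ _k : l, (a + b) := sum_le_sum fun k _ => add_le_add (hM i j) (hN i k)
    _ = card l * (a + b) := by simp [mul_add]

theorem frobenius_norm_card_smul_mul_sub_mul_ones_mul_le [Fintype l] [Fintype n]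
    (G : Matrix l n ℝ) {M N : Matrix n n ℝ} {ψ : n → ℝ} {a b : ℝ}
    (hM : ∀ i j, |M j i - ψ i| ≤ a) (hN : ∀ i k, |N k i - ψ i| ≤ b) :
    ‖(card n : ℝ) • (G * M) - G * of (fun (_ : n) (_ : n) => (1 : ℝ)) * N‖
      ≤ card n ^ 2 * (a + b) * ‖G‖ := by
  rw [Matrix.mul_assoc, ← Matrix.mul_smul, ← Matrix.mul_sub]
  calc _ ≤ ‖G‖ * ‖(card n : ℝ) • M - of (fun (_ : n) (_ : n) => (1 : ℝ)) * N‖ :=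
        frobenius_norm_mul _ _
    _ ≤ ‖G‖ * (√(card n * card n) * (card n * (a + b))) := by
      gcongr
      exact frobenius_norm_le_of_forall_abs_le _ (abs_card_smul_sub_ones_mul_apply_le hM hN)
    _ = card n ^ 2 * (a + b) * ‖G‖ := by
      rw [Real.sqrt_mul_self (Nat.cast_nonneg _)]
      ring

end Matrix

theorem frobNorm_eq_norm {d n : ℕ} (A : Matrix (Fin d) (Fin n) ℝ) : frobNorm A = ‖A‖ :=
  (Matrix.frobenius_norm_eq_sqrt A).symm

theorem frobenius_deviation_bound_general
    (n d : ℕ)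
    (W : Matrix (Fin n) (Fin n) ℝ)
    (ψ : Fin n → ℝ)
    (C q : ℝ) (hC : 0 ≤ C) (hq0 : 0 ≤ q) (hq1 : q < 1)
    (hWgeom : ∀ k : ℕ, 1 ≤ k → ∀ i j : Fin n, |(W ^ k) j i - ψ i| ≤ C * q ^ k)
    (G : ℕ → Matrix (Fin d) (Fin n) ℝ) (t : ℕ) :
    frobNorm (∑ s ∈ Finset.range (t + 1),
        ((n : ℝ) • (G s * W ^ (t - s + 1))
          - G s * (Matrix.of fun _ _ : Fin n => (1 : ℝ)) * W ^ (t + 1)))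
      ≤ 2 * (n : ℝ) ^ 2 * C * q * ∑ s ∈ Finset.range (t + 1), q ^ (t - s) * frobNorm (G s) := by
  simp only [frobNorm_eq_norm]
  have hterm : ∀ s ∈ range (t + 1),
      ‖(n : ℝ) • (G s * W ^ (t - s + 1))
          - G s * Matrix.of (fun _ _ : Fin n => (1 : ℝ)) * W ^ (t + 1)‖
        ≤ 2 * (n : ℝ) ^ 2 * C * q * (q ^ (t - s) * ‖G s‖) := by
    intro s _
    have hdecay : C * q ^ (t - s + 1) + C * q ^ (t + 1) ≤ 2 * C * q * q ^ (t - s) := by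
      have hle : C * q ^ (t + 1) ≤ C * q ^ (t - s + 1) :=
        mul_le_mul_of_nonneg_left (pow_le_pow_of_le_one hq0 hq1.le (by omega)) hC
      rw [pow_succ q (t - s)] at hle ⊢
      linarith
    have h := Matrix.frobenius_norm_card_smul_mul_sub_mul_ones_mul_le (G s)
      (hWgeom (t - s + 1) (by omega)) (hWgeom (t + 1) (by omega))
    rw [Fintype.card_fin] at h
    calc _ ≤ (n : ℝ) ^ 2 * (C * q ^ (t - s + 1) + C * q ^ (t + 1)) * ‖G s‖ := h
      _ ≤ (n : ℝ) ^ 2 * (2 * C * q * q ^ (t - s)) * ‖G s‖ := by gcongr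
      _ = _ := by ring
  calc _ ≤ _ := norm_sum_le _ _
    _ ≤ _ := sum_le_sum hterm
    _ = _ := (mul_sum _ _ _).symm

/-- The central Frobenius-norm deviation estimate in the proof of Lemma 4:
`‖∑_{s=0}^t (n G_s W^{t-s+1} - G_s 1 1ᵀ W^{t+1})‖_F ≤ 2 n² C q ∑_{s=0}^t q^{t-s} ‖G_s‖_F`. -/
theorem frobenius_deviation_bound
    (n d : ℕ) (hn : 0 < n)
    (W : Matrix (Fin n) (Fin n) ℝ)
    (hW_nonneg : ∀ i j, 0 ≤ W i j)
    (hW_row : ∀ i, ∑ j, W i j = 1)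
    (ψ : Fin n → ℝ) (hψ0 : ∀ i, 0 ≤ ψ i) (hψ1 : ∑ i, ψ i = 1)
    (C q : ℝ) (hC : 0 ≤ C) (hq0 : 0 ≤ q) (hq1 : q < 1)
    (hWgeom : ∀ k : ℕ, 1 ≤ k → ∀ i j : Fin n, |(W ^ k) j i - ψ i| ≤ C * q ^ k)
    (G : ℕ → Matrix (Fin d) (Fin n) ℝ) (t : ℕ) :
    frobNorm (∑ s ∈ Finset.range (t + 1),
        ((n : ℝ) • (G s * W ^ (t - s + 1))
          - G s * (Matrix.of fun _ _ : Fin n => (1 : ℝ)) * W ^ (t + 1)))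
      ≤ 2 * (n : ℝ) ^ 2 * C * q * ∑ s ∈ Finset.range (t + 1), q ^ (t - s) * frobNorm (G s) :=
  frobenius_deviation_bound_general n d W ψ C q hC hq0 hq1 hWgeom G t
end

section
/- In the matrix form of OPS, assume there exist a stochastic vector ψ ∈ ℝ^n and constants C ≥ 0, q ∈ [0,1) such that |(W^k)_{ji} − ψ_i| ≤ C q^k for all i, j ∈ [n] and k ≥ 1, and a constant δ_min > 0 such that Σ_j (W^k)_{ji} ≥ n δ_min for all i ∈ [n] and k ≥ 1. Then for every t ≥ 0, Σ_{i=1}^n ‖x_{t+1}^{(i)} − z̄_{t+1}‖² ≤ (4 γ² C² q² / δ_min²) ( Σ_{s=0}^t q^{t−s} ‖G_s‖_F )². -/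
/-!
Unrolling the recursions gives `Z_{t+1} = -γ ∑_{s ≤ t} G_s W^{t+1-s}` and shows that
`ω_{t+1}^{(i)}` is the `i`-th column sum of `W^{t+1}`. As every power of `W` fixes the all-ones
vector, the deviation `x_{t+1}^{(i)} - z̄_{t+1}` is `-γ ∑_s G_s u_s` with
`(u_s)_j = (W^k)_{ji} / ω_{t+1}^{(i)} - 1/n`, `k = t + 1 - s`. Both `(W^k)_{ji}` and every entry of column `i` of `W^{t+1}` lie within `C q^k`
of `ψ_i`, and `ω_{t+1}^{(i)} ≥ n δ_min`, so `|(u_s)_j| ≤ 2 C q^k / (n δ_min)`. Cauchy–Schwarz gives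
`‖G_s u_s‖ ≤ ‖G_s‖_F √n ‖u_s‖_∞`; the triangle inequality over `s` bounds each node's deviation,
and summing the squares over the `n` nodes cancels the remaining factor `1/n`.
-/

open Finset

namespace Matrix

variable {R ι κ : Type*} [Fintype ι] [DecidableEq ι]

theorem pow_mulVec_eq_self [CommSemiring R] {W : Matrix ι ι R} {v : ι → R}
    (hv : W *ᵥ v = v) (k : ℕ) : W ^ k *ᵥ v = v := by
  induction k with
  | zero => exact one_mulVec v
  | succ k ih => rw [pow_succ', ← mulVec_mulVec, ih, hv]

theorem eq_one_vecMul_pow_of_succ [CommSemiring R] {W : Matrix ι ι R} {w : ℕ → ι → R}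
    (h0 : w 0 = 1) (hsucc : ∀ t, w (t + 1) = w t ᵥ* W) (t : ℕ) : w t = 1 ᵥ* W ^ t := by
  induction t with
  | zero => rw [h0, pow_zero, vecMul_one]
  | succ t ih => rw [hsucc, ih, vecMul_vecMul, pow_succ]

theorem eq_neg_smul_sum_mul_pow_of_succ [CommRing R] {W : Matrix ι ι R} {γ : R}
    {G Z : ℕ → Matrix κ ι R} (h0 : Z 0 = 0) (hsucc : ∀ t, Z (t + 1) = (Z t - γ • G t) * W)
    (t : ℕ) : Z t = -γ • ∑ s ∈ range t, G s * W ^ (t - s) := by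
  induction t with
  | zero => simp [h0]
  | succ t ih =>
    have hpow : ∀ s ∈ range t, G s * W ^ (t - s) * W = G s * W ^ (t + 1 - s) := fun s hs => by
      rw [Matrix.mul_assoc, ← pow_succ, Nat.sub_add_comm (mem_range.mp hs).le]
    rw [hsucc, ih, sum_range_succ, Nat.add_sub_cancel_left, pow_one, smul_add, sub_eq_add_neg,
      Matrix.add_mul, Matrix.smul_mul, Matrix.sum_mul, sum_congr rfl hpow, neg_smul,
      Matrix.neg_mul, Matrix.smul_mul, neg_smul]

theorem mulVec_smul_single_sub_smul_one_apply [CommRing R] (P : Matrix κ ι R) (c a : R)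
    (i : ι) (j : κ) :
    (P *ᵥ (c • Pi.single i 1 - a • 1)) j = c * P j i - a * ∑ i', P j i' := by
  simp [mulVec, dotProduct_one]

end Matrix

open Matrix

theorem abs_inv_sum_mul_sub_inv_card_le {ι : Type*} [Fintype ι] [Nonempty ι] {b : ι → ℝ}
    {a ψ ε δ : ℝ} (hδ : 0 < δ) (ha : |a - ψ| ≤ ε) (hb : ∀ j, |b j - ψ| ≤ ε)
    (hlow : Fintype.card ι * δ ≤ ∑ j, b j) :
    |(∑ j, b j)⁻¹ * a - (Fintype.card ι : ℝ)⁻¹| ≤ 2 * ε / (Fintype.card ι * δ) := by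
  set N : ℝ := (Fintype.card ι : ℝ)
  have hN : 0 < N := Nat.cast_pos.mpr Fintype.card_pos
  have hε : 0 ≤ ε := (abs_nonneg _).trans ha
  have hsum : 0 < ∑ j, b j := lt_of_lt_of_le (by positivity) hlow
  have hnum : |N * a - ∑ j, b j| ≤ N * (2 * ε) := calc
    |N * a - ∑ j, b j| = |∑ j, ((a - ψ) - (b j - ψ))| := by
      simp [N, sum_sub_distrib]
    _ ≤ ∑ j, (|a - ψ| + |b j - ψ|) := (abs_sum_le_sum_abs _ _).trans
      (sum_le_sum fun j _ => abs_sub _ _)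
    _ ≤ ∑ _j : ι, 2 * ε := sum_le_sum fun j _ => by linarith [hb j]
    _ = N * (2 * ε) := by simp [N]
  calc |(∑ j, b j)⁻¹ * a - N⁻¹| = |N * a - ∑ j, b j| / (N * ∑ j, b j) := by
        rw [← abs_of_pos (mul_pos hN hsum), ← abs_div]
        congr 1
        field_simp
    _ ≤ N * (2 * ε) / (N * (N * δ)) := by gcongr
    _ = 2 * ε / (N * δ) := by field_simp

theorem norm_toLp_le_sqrt_card_mul {ι : Type*} [Fintype ι] {u : ι → ℝ} {ε : ℝ} (hε : 0 ≤ ε)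
    (hu : ∀ j, |u j| ≤ ε) : ‖WithLp.toLp 2 u‖ ≤ √(Fintype.card ι) * ε := by
  rw [EuclideanSpace.norm_eq, ← Real.sqrt_sq hε, ← Real.sqrt_mul (Nat.cast_nonneg _)]
  gcongr
  calc ∑ j, ‖u j‖ ^ 2 ≤ ∑ _j : ι, ε ^ 2 := sum_le_sum fun j _ => by
        rw [Real.norm_eq_abs]; gcongr; exact hu j
    _ = _ := by simp

theorem norm_toLp_mulVec_le_frobNorm_mul {d n : ℕ} (A : Matrix (Fin d) (Fin n) ℝ)
    (u : Fin n → ℝ) : ‖WithLp.toLp 2 (A *ᵥ u)‖ ≤ frobNorm A * ‖WithLp.toLp 2 u‖ := by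
  rw [EuclideanSpace.norm_eq, EuclideanSpace.norm_eq, frobNorm,
    ← Real.sqrt_mul' _ (by positivity), sum_mul]
  gcongr with r
  simpa [mulVec, dotProduct] using sum_mul_sq_le_sq_mul_sq univ (A r) u

theorem frobNorm_nonneg {d n : ℕ} (A : Matrix (Fin d) (Fin n) ℝ) : 0 ≤ frobNorm A :=
  Real.sqrt_nonneg _

/-- `Z *ᵥ deviationVec W t i` is `x_t^{(i)} - z̄_t` when `ω_t^{(i)}` is the `i`-th column sum
of `W ^ t`. -/
noncomputable def deviationVec {n : ℕ} (W : Matrix (Fin n) (Fin n) ℝ) (t : ℕ) (i : Fin n) :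
    Fin n → ℝ :=
  (∑ j, (W ^ t) j i)⁻¹ • Pi.single i 1 - (n : ℝ)⁻¹ • 1

theorem norm_toLp_sum_mul_pow_mulVec_deviationVec_le {d n : ℕ} {W : Matrix (Fin n) (Fin n) ℝ}
    (hW : W *ᵥ 1 = 1) {ψ : Fin n → ℝ} {C q δ : ℝ} (hC : 0 ≤ C) (hq0 : 0 ≤ q) (hq1 : q ≤ 1)
    (hδ : 0 < δ) (hgeom : ∀ k : ℕ, 1 ≤ k → ∀ i j : Fin n, |(W ^ k) j i - ψ i| ≤ C * q ^ k)
    (G : ℕ → Matrix (Fin d) (Fin n) ℝ) (t : ℕ) (i : Fin n)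
    (hlow : (n : ℝ) * δ ≤ ∑ j, (W ^ (t + 1)) j i) :
    ‖WithLp.toLp 2 ((∑ s ∈ range (t + 1), G s * W ^ (t + 1 - s)) *ᵥ deviationVec W (t + 1) i)‖
      ≤ √n * (2 * C * q / (n * δ)) * ∑ s ∈ range (t + 1), q ^ (t - s) * frobNorm (G s) := by
  have : Nonempty (Fin n) := ⟨i⟩
  have hentry : ∀ s ∈ range (t + 1), ∀ j,
      |(W ^ (t + 1 - s) *ᵥ deviationVec W (t + 1) i) j|
        ≤ 2 * (C * q ^ (t + 1 - s)) / (n * δ) := by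
    intro s hs j
    have hk : 1 ≤ t + 1 - s := by have := mem_range.mp hs; omega
    have hrow : ∑ i', (W ^ (t + 1 - s)) j i' = 1 := by
      simpa [mulVec, dotProduct] using congrFun (pow_mulVec_eq_self hW (t + 1 - s)) j
    have hcol : ∀ j', |(W ^ (t + 1)) j' i - ψ i| ≤ C * q ^ (t + 1 - s) := fun j' =>
      (hgeom _ le_add_self i j').trans
        (mul_le_mul_of_nonneg_left (pow_le_pow_of_le_one hq0 hq1 (Nat.sub_le _ _)) hC)
    rw [deviationVec, mulVec_smul_single_sub_smul_one_apply, hrow, mul_one]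
    simpa using abs_inv_sum_mul_sub_inv_card_le hδ (hgeom _ hk i j) hcol (by simpa using hlow)
  calc _ = ‖∑ s ∈ range (t + 1),
          WithLp.toLp 2 (G s *ᵥ (W ^ (t + 1 - s) *ᵥ deviationVec W (t + 1) i))‖ := by
        simp only [sum_mulVec, WithLp.toLp_sum, mulVec_mulVec]
    _ ≤ ∑ s ∈ range (t + 1), frobNorm (G s) * (√n * (2 * (C * q ^ (t + 1 - s)) / (n * δ))) :=
        norm_sum_le_of_le _ fun s hs => (norm_toLp_mulVec_le_frobNorm_mul _ _).trans <| by
          gcongr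
          · exact frobNorm_nonneg _
          · simpa using norm_toLp_le_sqrt_card_mul (by positivity) (hentry s hs)
    _ = _ := by
        rw [mul_sum]
        refine sum_congr rfl fun s hs => ?_
        rw [show t + 1 - s = t - s + 1 by have := mem_range.mp hs; omega, pow_succ]
        ring

theorem ops_per_iteration_consensus_bound_general
    (n d : ℕ) (γ : ℝ)
    (W : Matrix (Fin n) (Fin n) ℝ)
    (hW_row : ∀ i, ∑ j, W i j = 1)
    (ψ : Fin n → ℝ)
    (C q δmin : ℝ) (hC : 0 ≤ C) (hq0 : 0 ≤ q) (hq1 : q < 1) (hδ : 0 < δmin)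
    (hWgeom : ∀ k : ℕ, 1 ≤ k → ∀ i j : Fin n, |(W ^ k) j i - ψ i| ≤ C * q ^ k)
    (hWlow : ∀ k : ℕ, 1 ≤ k → ∀ i : Fin n, (n : ℝ) * δmin ≤ ∑ j, (W ^ k) j i)
    (G : ℕ → Matrix (Fin d) (Fin n) ℝ)
    (Z : ℕ → Matrix (Fin d) (Fin n) ℝ)
    (hZ0 : Z 0 = 0)
    (hZrec : ∀ t, Z (t + 1) = (Z t - γ • G t) * W)
    (w : ℕ → Fin n → ℝ)
    (hw0 : ∀ i, w 0 i = 1)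
    (hwrec : ∀ t i, w (t + 1) i = ∑ j, W j i * w t j)
    (x : ℕ → Fin n → Fin d → ℝ)
    (hx : ∀ t i r, x t i r = (w t i)⁻¹ * Z t r i)
    (zbar : ℕ → Fin d → ℝ)
    (hzbar : ∀ t r, zbar t r = (n : ℝ)⁻¹ * ∑ i, Z t r i)
    (t : ℕ) :
    ∑ i, ∑ r, (x (t + 1) i r - zbar (t + 1) r) ^ 2
      ≤ 4 * γ ^ 2 * C ^ 2 * q ^ 2 / δmin ^ 2
        * (∑ s ∈ Finset.range (t + 1), q ^ (t - s) * frobNorm (G s)) ^ 2 := by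
  set T := ∑ s ∈ range (t + 1), q ^ (t - s) * frobNorm (G s)
  have hW : W *ᵥ 1 = 1 := funext fun j => by simpa [mulVec, dotProduct] using hW_row j
  have hw : w (t + 1) = 1 ᵥ* W ^ (t + 1) := eq_one_vecMul_pow_of_succ (funext hw0)
    (fun s => funext fun i => by simp [hwrec, vecMul, dotProduct, mul_comm]) _
  have hZ := eq_neg_smul_sum_mul_pow_of_succ hZ0 hZrec (t + 1)
  have hnode : ∀ i, ∑ r, (x (t + 1) i r - zbar (t + 1) r) ^ 2
      ≤ γ ^ 2 * (√n * (2 * C * q / (n * δmin)) * T) ^ 2 := fun i => calc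
    _ = ‖WithLp.toLp 2 (-γ • ((∑ s ∈ range (t + 1), G s * W ^ (t + 1 - s)) *ᵥ
          deviationVec W (t + 1) i))‖ ^ 2 := by
        rw [EuclideanSpace.norm_sq_eq, ← smul_mulVec, ← hZ]
        simp [deviationVec, mulVec_smul_single_sub_smul_one_apply, hx, hzbar, hw, vecMul,
          one_dotProduct]
    _ ≤ γ ^ 2 * (√n * (2 * C * q / (n * δmin)) * T) ^ 2 := by
        rw [WithLp.toLp_smul, norm_smul, norm_neg, mul_pow, Real.norm_eq_abs, sq_abs]
        gcongr
        exact norm_toLp_sum_mul_pow_mulVec_deviationVec_le hW hC hq0 hq1.le hδ hWgeom G t i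
          (hWlow _ le_add_self i)
  obtain rfl | hn := n.eq_zero_or_pos
  · simp only [univ_eq_empty, sum_empty]
    positivity
  calc _ ≤ ∑ _i : Fin n, γ ^ 2 * (√n * (2 * C * q / (n * δmin)) * T) ^ 2 :=
        sum_le_sum fun i _ => hnode i
    _ = _ := by
        rw [sum_const, card_univ, Fintype.card_fin, nsmul_eq_mul, mul_pow, mul_pow,
          Real.sq_sqrt (by positivity)]
        field_simp
        ring

/-- Per-iteration consensus bound in the proof of Lemma 4:
`∑_i ‖x_{t+1}^{(i)} - z̄_{t+1}‖² ≤ (4 γ² C² q² / δ_min²) (∑_{s=0}^t q^{t-s} ‖G_s‖_F)²`. -/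
theorem ops_per_iteration_consensus_bound
    (n d : ℕ) (hn : 0 < n) (hd : 0 < d) (γ : ℝ) (hγ : 0 < γ)
    (W : Matrix (Fin n) (Fin n) ℝ)
    (hW_nonneg : ∀ i j, 0 ≤ W i j)
    (hW_row : ∀ i, ∑ j, W i j = 1)
    (ψ : Fin n → ℝ) (hψ0 : ∀ i, 0 ≤ ψ i) (hψ1 : ∑ i, ψ i = 1)
    (C q δmin : ℝ) (hC : 0 ≤ C) (hq0 : 0 ≤ q) (hq1 : q < 1) (hδ : 0 < δmin)
    (hWgeom : ∀ k : ℕ, 1 ≤ k → ∀ i j : Fin n, |(W ^ k) j i - ψ i| ≤ C * q ^ k)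
    (hWlow : ∀ k : ℕ, 1 ≤ k → ∀ i : Fin n, (n : ℝ) * δmin ≤ ∑ j, (W ^ k) j i)
    (G : ℕ → Matrix (Fin d) (Fin n) ℝ)
    (Z : ℕ → Matrix (Fin d) (Fin n) ℝ)
    (hZ0 : Z 0 = 0)
    (hZrec : ∀ t, Z (t + 1) = (Z t - γ • G t) * W)
    (w : ℕ → Fin n → ℝ)
    (hw0 : ∀ i, w 0 i = 1)
    (hwrec : ∀ t i, w (t + 1) i = ∑ j, W j i * w t j)
    (x : ℕ → Fin n → Fin d → ℝ)
    (hx : ∀ t i r, x t i r = (w t i)⁻¹ * Z t r i)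
    (zbar : ℕ → Fin d → ℝ)
    (hzbar : ∀ t r, zbar t r = (n : ℝ)⁻¹ * ∑ i, Z t r i)
    (t : ℕ) :
    ∑ i, ∑ r, (x (t + 1) i r - zbar (t + 1) r) ^ 2
      ≤ 4 * γ ^ 2 * C ^ 2 * q ^ 2 / δmin ^ 2
        * (∑ s ∈ Finset.range (t + 1), q ^ (t - s) * frobNorm (G s)) ^ 2 :=
  ops_per_iteration_consensus_bound_general n d γ W hW_row ψ C q δmin hC hq0 hq1 hδ hWgeom hWlow G Z
    hZ0 hZrec w hw0 hwrec x hx zbar hzbar t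
end
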